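/- Let m > 1 and let k : (0,∞)² → [0,∞) be measurable and symmetric. Let ψ, φ be measurable functions on (0,∞) such that I := ∫₀^∞∫₀^∞ k(x,y)·[x+y+(x+y)^m]·|ψ(x)|·|φ(y)| dy dx < ∞. Then ∫₀^∞ (x+x^m)·|K(ψ,φ)(x)| dx ≤ (3/2)·I. -/

import Mathlib

open MeasureTheory Set Real
open scoped ENNReal

/-- The coagulation operator
`K(ψ,φ)(x) = (1/2)∫₀^x k(y, x−y)ψ(y)φ(x−y) dy − ψ(x)∫₀^∞ k(x,y)φ(y) dy`. -/
noncomputable def coagOp (k : ℝ → ℝ → ℝ) (ψ φ : ℝ → ℝ) (x : ℝ) : ℝ :=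
  (1 / 2) * (∫ y in Ioo 0 x, k y (x - y) * ψ y * φ (x - y))
    - ψ x * ∫ y in Ioi (0 : ℝ), k x y * φ y

private lemma coag_ioo_indicator (F : ℝ → ℝ → ℝ≥0∞) (x : ℝ) :
    (∫⁻ y in Ioo 0 x, F x y) = ∫⁻ y in Ioi (0:ℝ), (Iio x).indicator (F x) y := by
  rw [lintegral_indicator measurableSet_Iio, Measure.restrict_restrict measurableSet_Iio,
    Set.Iio_inter_Ioi]

private lemma coag_indicator_meas {F : ℝ → ℝ → ℝ≥0∞} (hF : Measurable (Function.uncurry F)) :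
    Measurable (Function.uncurry fun x => (Iio x).indicator (F x)) := by
  have h : (fun p : ℝ × ℝ => (Iio p.1).indicator (F p.1) p.2)
      = {p : ℝ × ℝ | p.2 < p.1}.indicator (Function.uncurry F) := by
    ext p
    by_cases h : p.2 < p.1 <;> simp [Set.indicator, h, Function.uncurry]
  rw [show (Function.uncurry fun x => (Iio x).indicator (F x))
      = (fun p : ℝ × ℝ => (Iio p.1).indicator (F p.1) p.2) from rfl, h]
  exact hF.indicator (measurableSet_lt measurable_snd measurable_fst)

private lemma coag_tri_meas {F : ℝ → ℝ → ℝ≥0∞} (hF : Measurable (Function.uncurry F)) :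
    Measurable (fun x => ∫⁻ y in Ioo 0 x, F x y) := by
  have h : (fun x => ∫⁻ y in Ioo 0 x, F x y)
      = fun x => ∫⁻ y in Ioi (0:ℝ), (Iio x).indicator (F x) y :=
    funext fun x => coag_ioo_indicator F x
  rw [h]
  exact Measurable.lintegral_prod_right (coag_indicator_meas hF)

/-- Change of variables on the triangle `{0 < y < x}`. -/
private lemma coag_tri_swap (F : ℝ → ℝ → ℝ≥0∞) (hF : Measurable (Function.uncurry F)) :
    (∫⁻ x in Ioi (0:ℝ), ∫⁻ y in Ioo 0 x, F x y)
      = ∫⁻ x in Ioi (0:ℝ), ∫⁻ y in Ioi (0:ℝ), F (x + y) x := by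
  simp only [coag_ioo_indicator F]
  rw [lintegral_lintegral_swap]
  · have h2 : ∀ y ∈ Ioi (0:ℝ),
        (∫⁻ x in Ioi (0:ℝ), (Iio x).indicator (F x) y)
          = ∫⁻ z in Ioi (0:ℝ), F (y + z) y := by
      intro y hy
      have : ∀ x : ℝ, (Iio x).indicator (F x) y = (Ioi y).indicator (fun x => F x y) x := by
        intro x
        by_cases h : y < x <;> simp [Set.indicator, h]
      simp only [this]
      rw [lintegral_indicator measurableSet_Ioi, Measure.restrict_restrict measurableSet_Ioi]
      have hset : Ioi y ∩ Ioi (0:ℝ) = Ioi y := by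
        apply Set.inter_eq_self_of_subset_left
        exact fun z hz => mem_Ioi.2 (lt_trans (mem_Ioi.1 hy) (mem_Ioi.1 hz))
      rw [hset]
      have hmp := (measurePreserving_add_right (volume : Measure ℝ)
        y).setLIntegral_comp_preimage_emb
        (measurableEmbedding_addRight y) (fun x => F x y) (Ioi y)
      have hpre : (· + y) ⁻¹' (Ioi y) = Ioi (0:ℝ) := by
        ext z; simp [Set.mem_preimage]
      rw [hpre] at hmp
      rw [← hmp]
      refine lintegral_congr fun z => by rw [add_comm]
    rw [setLIntegral_congr_fun measurableSet_Ioi h2]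
  · exact (coag_indicator_meas hF).aemeasurable

/-- if `I = ∫₀^∞∫₀^∞ k(x,y)[x+y+(x+y)^m]|ψ(x)||φ(y)| dy dx < ∞`, then
`∫₀^∞ (x+x^m)|K(ψ,φ)(x)| dx ≤ (3/2)·I`. -/
theorem coag_E0_estimate (m : ℝ) (k : ℝ → ℝ → ℝ) (ψ φ : ℝ → ℝ)
    (hm : 1 < m)
    (hk : Measurable (Function.uncurry k))
    (hksym : ∀ x y : ℝ, 0 < x → 0 < y → k x y = k y x)
    (hknn : ∀ x y : ℝ, 0 < x → 0 < y → 0 ≤ k x y)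
    (hψm : Measurable ψ) (hφm : Measurable φ)
    (hI : (∫⁻ x in Ioi (0 : ℝ), ∫⁻ y in Ioi (0 : ℝ),
        ENNReal.ofReal (k x y * (x + y + (x + y) ^ m) * |ψ x| * |φ y|)) < ⊤) :
    (∫⁻ x in Ioi (0 : ℝ), ENNReal.ofReal ((x + x ^ m) * |coagOp k ψ φ x|)) ≤
      ENNReal.ofReal (3 / 2) *
        ∫⁻ x in Ioi (0 : ℝ), ∫⁻ y in Ioi (0 : ℝ),
          ENNReal.ofReal (k x y * (x + y + (x + y) ^ m) * |ψ x| * |φ y|) := by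
  have hm0 : (0:ℝ) ≤ m := by linarith
  -- abbreviations
  set I : ℝ≥0∞ := ∫⁻ x in Ioi (0 : ℝ), ∫⁻ y in Ioi (0 : ℝ),
      ENNReal.ofReal (k x y * (x + y + (x + y) ^ m) * |ψ x| * |φ y|) with hIdef
  set F₁ : ℝ → ℝ → ℝ≥0∞ :=
    fun x y => ENNReal.ofReal ((x + x ^ m) * |k y (x - y) * ψ y * φ (x - y)|) with hF₁def
  set A : ℝ → ℝ≥0∞ := fun x => ∫⁻ y in Ioo 0 x, F₁ x y with hAdef
  set B : ℝ → ℝ≥0∞ :=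
    fun x => ∫⁻ y in Ioi (0:ℝ), ENNReal.ofReal ((x + x ^ m) * |ψ x| * |k x y * φ y|) with hBdef
  have hwm : Measurable (fun x : ℝ => x + x ^ m) :=
    measurable_id.add ((Real.continuous_rpow_const hm0).measurable)
  have hF₁m : Measurable (Function.uncurry F₁) := by
    apply ENNReal.measurable_ofReal.comp
    apply Measurable.mul
    · exact hwm.comp measurable_fst
    · apply Measurable.abs
      apply Measurable.mul
      · apply Measurable.mul
        · exact hk.comp (measurable_snd.prodMk (measurable_fst.sub measurable_snd))
        · exact hψm.comp measurable_snd
      · exact hφm.comp (measurable_fst.sub measurable_snd)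
  have hBinm : Measurable (fun p : ℝ × ℝ =>
      ENNReal.ofReal ((p.1 + p.1 ^ m) * |ψ p.1| * |k p.1 p.2 * φ p.2|)) := by
    apply ENNReal.measurable_ofReal.comp
    apply Measurable.mul
    · exact ((hwm.comp measurable_fst).mul (hψm.comp measurable_fst).abs)
    · exact ((hk.comp (measurable_fst.prodMk measurable_snd)).mul
        (hφm.comp measurable_snd)).abs
  have hAm : Measurable A := coag_tri_meas hF₁m
  have hBm : Measurable B := Measurable.lintegral_prod_right hBinm
  -- pointwise bound
  have key1 : ∀ x ∈ Ioi (0:ℝ),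
      ENNReal.ofReal ((x + x ^ m) * |coagOp k ψ φ x|)
        ≤ ENNReal.ofReal (1/2) * A x + B x := by
    intro x hx
    have hx0 : (0:ℝ) < x := hx
    have hc : (0:ℝ) ≤ x + x ^ m := by positivity
    set I1 := ∫ y in Ioo 0 x, k y (x - y) * ψ y * φ (x - y) with hI1
    set I2 := ∫ y in Ioi (0:ℝ), k x y * φ y with hI2
    have habs : |coagOp k ψ φ x| ≤ 1/2 * |I1| + |ψ x| * |I2| := by
      have h := abs_sub ((1/2 : ℝ) * I1) (ψ x * I2)
      rw [abs_mul, abs_mul] at h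
      simpa [coagOp, abs_of_nonneg] using h
    have step1 : ENNReal.ofReal ((x + x ^ m) * |coagOp k ψ φ x|)
        ≤ ENNReal.ofReal (1/2 * ((x + x ^ m) * |I1|))
          + ENNReal.ofReal ((x + x ^ m) * |ψ x| * |I2|) := by
      rw [← ENNReal.ofReal_add (by positivity) (by positivity)]
      apply ENNReal.ofReal_le_ofReal
      calc (x + x ^ m) * |coagOp k ψ φ x|
          ≤ (x + x ^ m) * (1/2 * |I1| + |ψ x| * |I2|) :=
            mul_le_mul_of_nonneg_left habs hc
        _ = 1/2 * ((x + x ^ m) * |I1|) + (x + x ^ m) * |ψ x| * |I2| := by ring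
    refine step1.trans (add_le_add ?_ ?_)
    · rw [ENNReal.ofReal_mul (by norm_num : (0:ℝ) ≤ 1/2)]
      apply mul_le_mul_right
      rw [ENNReal.ofReal_mul hc, ← Real.enorm_eq_ofReal_abs I1]
      calc ENNReal.ofReal (x + x ^ m) * ‖I1‖ₑ
          ≤ ENNReal.ofReal (x + x ^ m)
            * ∫⁻ y in Ioo 0 x, ‖k y (x - y) * ψ y * φ (x - y)‖ₑ :=
            mul_le_mul_right (enorm_integral_le_lintegral_enorm _) _
        _ = ∫⁻ y in Ioo 0 x, ENNReal.ofReal (x + x ^ m)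
            * ‖k y (x - y) * ψ y * φ (x - y)‖ₑ :=
            (lintegral_const_mul' _ _ ENNReal.ofReal_ne_top).symm
        _ = A x := by
            refine lintegral_congr fun y => ?_
            rw [Real.enorm_eq_ofReal_abs, ← ENNReal.ofReal_mul hc]
    · rw [ENNReal.ofReal_mul (by positivity : (0:ℝ) ≤ (x + x ^ m) * |ψ x|),
        ← Real.enorm_eq_ofReal_abs I2]
      calc ENNReal.ofReal ((x + x ^ m) * |ψ x|) * ‖I2‖ₑ
          ≤ ENNReal.ofReal ((x + x ^ m) * |ψ x|)
            * ∫⁻ y in Ioi (0:ℝ), ‖k x y * φ y‖ₑ :=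
            mul_le_mul_right (enorm_integral_le_lintegral_enorm _) _
        _ = ∫⁻ y in Ioi (0:ℝ), ENNReal.ofReal ((x + x ^ m) * |ψ x|)
            * ‖k x y * φ y‖ₑ :=
            (lintegral_const_mul' _ _ ENNReal.ofReal_ne_top).symm
        _ = B x := by
            refine lintegral_congr fun y => ?_
            rw [Real.enorm_eq_ofReal_abs, ← ENNReal.ofReal_mul (by positivity)]
  -- the gain term equals I
  have hAeq : (∫⁻ x in Ioi (0:ℝ), A x) = I := by
    rw [hAdef, coag_tri_swap F₁ hF₁m, hIdef]
    refine setLIntegral_congr_fun measurableSet_Ioi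
      (fun x hx => ?_)
    refine setLIntegral_congr_fun measurableSet_Ioi
      (fun y hy => ?_)
    have hx0 : (0:ℝ) < x := hx
    have hy0 : (0:ℝ) < y := hy
    simp only [hF₁def, add_sub_cancel_left]
    congr 1
    rw [abs_mul, abs_mul, abs_of_nonneg (hknn x y hx0 hy0)]
    ring
  -- the loss term is bounded by I
  have hBle : (∫⁻ x in Ioi (0:ℝ), B x) ≤ I := by
    rw [hIdef]
    refine lintegral_mono_ae ((ae_restrict_iff' measurableSet_Ioi).2
      (Filter.Eventually.of_forall fun x hx => ?_))
    refine lintegral_mono_ae ((ae_restrict_iff' measurableSet_Ioi).2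
      (Filter.Eventually.of_forall fun y hy => ?_))
    have hx0 : (0:ℝ) < x := hx
    have hy0 : (0:ℝ) < y := hy
    apply ENNReal.ofReal_le_ofReal
    have hrp : x ^ m ≤ (x + y) ^ m :=
      Real.rpow_le_rpow (le_of_lt hx0) (by linarith) hm0
    have hwle : x + x ^ m ≤ x + y + (x + y) ^ m := by linarith
    have hk0 := hknn x y hx0 hy0
    calc (x + x ^ m) * |ψ x| * |k x y * φ y|
        = k x y * (x + x ^ m) * |ψ x| * |φ y| := by
          rw [abs_mul, abs_of_nonneg hk0]; ring
      _ ≤ k x y * (x + y + (x + y) ^ m) * |ψ x| * |φ y| := by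
          have h1 : k x y * (x + x ^ m) ≤ k x y * (x + y + (x + y) ^ m) :=
            mul_le_mul_of_nonneg_left hwle hk0
          have h2 : k x y * (x + x ^ m) * |ψ x| ≤ k x y * (x + y + (x + y) ^ m) * |ψ x| :=
            mul_le_mul_of_nonneg_right h1 (abs_nonneg _)
          exact mul_le_mul_of_nonneg_right h2 (abs_nonneg _)
  -- put everything together
  calc (∫⁻ x in Ioi (0:ℝ), ENNReal.ofReal ((x + x ^ m) * |coagOp k ψ φ x|))
      ≤ ∫⁻ x in Ioi (0:ℝ), (ENNReal.ofReal (1/2) * A x + B x) :=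
        lintegral_mono_ae ((ae_restrict_iff' measurableSet_Ioi).2
          (Filter.Eventually.of_forall key1))
    _ = ENNReal.ofReal (1/2) * (∫⁻ x in Ioi (0:ℝ), A x) + ∫⁻ x in Ioi (0:ℝ), B x := by
        rw [lintegral_add_left (hAm.const_mul _),
          lintegral_const_mul' _ _ ENNReal.ofReal_ne_top]
    _ ≤ ENNReal.ofReal (1/2) * I + I := by
        rw [hAeq]
        exact add_le_add_right hBle _
    _ = ENNReal.ofReal (3/2) * I := by
        have h32 : ENNReal.ofReal (3/2 : ℝ) = ENNReal.ofReal (1/2 : ℝ) + 1 := by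
          rw [← ENNReal.ofReal_one, ← ENNReal.ofReal_add (by norm_num) (by norm_num)]
          norm_num
        rw [h32, add_mul, one_mul]
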